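/- Let q be a prime power, let d, n, e be positive integers with d dividing q - 1, gcd(n·e, d) = 1, and n ≡ e (mod (q - 1)/d), and let a be a nonzero element of F_q. Then x^n·(x^d + a) is a permutation polynomial of F_q if and only if x^e·(x^d + a) is a permutation polynomial of F_q. -/

import Mathlib

/-!
Write `P x = x ^ n * h (x ^ d)`. For a `d`-th root of unity `η` we have `P (η x) = η ^ n P x`,
and since `n` is coprime to `d`, `η ↦ η ^ n` permutes the `d`-th roots of unity. Hence `P` is
injective exactly when `h` has no zero at a nonzero `d`-th power and `P x ^ d` determines `x ^ d`
on `Fˣ`. Now `P x ^ d = x ^ (d n) h (x ^ d) ^ d`, and `x ^ (d n)` only depends on `n` modulo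
`(q - 1) / d` because `x ^ (q - 1) = 1`; so the criterion is the same for `n` and for `e`.
-/

open Polynomial Function

section Criterion

variable {F : Type*} [Field F] {d n : ℕ} (h : F → F)

lemma pow_mul_comp_pow_root_of_unity_mul {η : F} (hη : η ^ d = 1) (x : F) :
    (η * x) ^ n * h ((η * x) ^ d) = η ^ n * (x ^ n * h (x ^ d)) := by
  rw [mul_pow, mul_pow, hη, one_mul, mul_assoc]

lemma pow_mul_comp_pow_pow (x : F) :
    (x ^ n * h (x ^ d)) ^ d = x ^ (d * n) * h (x ^ d) ^ d := by
  rw [mul_pow, ← pow_mul, mul_comm n d]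

lemma pow_eq_pow_of_injective_pow_mul_comp_pow (hnd : n.Coprime d)
    (hinj : Injective fun x => x ^ n * h (x ^ d)) {x y : F} (hx : x ^ n * h (x ^ d) ≠ 0)
    (hxy : x ^ (d * n) * h (x ^ d) ^ d = y ^ (d * n) * h (y ^ d) ^ d) : x ^ d = y ^ d := by
  set ζ := (y ^ n * h (y ^ d)) / (x ^ n * h (x ^ d))
  have hζ : ζ ^ d = 1 ^ n := by
    rw [div_pow, pow_mul_comp_pow_pow, pow_mul_comp_pow_pow, ← hxy, one_pow,
      div_self (by rw [← pow_mul_comp_pow_pow]; exact pow_ne_zero d hx)]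
  obtain ⟨η, hηn, hηd⟩ := (pow_eq_pow_iff_of_coprime hnd.symm).mp hζ
  have hηx : η * x = y := hinj <| by
    beta_reduce
    rw [pow_mul_comp_pow_root_of_unity_mul h hηd.symm, ← hηn, div_mul_cancel₀ _ hx]
  rw [← hηx, mul_pow, ← hηd, one_mul]

lemma injective_pow_mul_comp_pow (hn : 0 < n) (hnd : n.Coprime d)
    (h0 : ∀ x ≠ 0, h (x ^ d) ≠ 0)
    (hpow : ∀ x ≠ 0, ∀ y ≠ 0,
      x ^ (d * n) * h (x ^ d) ^ d = y ^ (d * n) * h (y ^ d) ^ d → x ^ d = y ^ d) :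
    Injective fun x => x ^ n * h (x ^ d) := by
  have hP : ∀ x, x ^ n * h (x ^ d) = 0 ↔ x = 0 := fun x =>
    ⟨fun hx => by_contra fun hx0 => mul_ne_zero (pow_ne_zero n hx0) (h0 x hx0) hx,
      by rintro rfl; rw [zero_pow hn.ne', zero_mul]⟩
  intro x y (hxy : x ^ n * h (x ^ d) = y ^ n * h (y ^ d))
  by_cases hx : x = 0
  · rw [hx, eq_comm, ← hP, ← hxy, hP, hx]
  have hy : y ≠ 0 := by rwa [Ne, ← hP, ← hxy, hP]
  have hd : x ^ d = y ^ d :=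
    hpow x hx y hy (by rw [← pow_mul_comp_pow_pow, hxy, pow_mul_comp_pow_pow])
  have hn : x ^ n = y ^ n := mul_right_cancel₀ (h0 y hy) (by rwa [hd] at hxy)
  have hroot : (y / x) ^ n = 1 ∧ (y / x) ^ d = 1 := by
    simp only [div_pow, hn, hd, div_self (pow_ne_zero _ hy), and_self]
  exact ((div_eq_one_iff_eq hx).mp ((pow_eq_one_iff_of_coprime hnd).mp hroot)).symm

theorem bijective_pow_mul_comp_pow_iff [Finite F] (hn : 0 < n) (hnd : n.Coprime d) :
    Bijective (fun x => x ^ n * h (x ^ d)) ↔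
      (∀ x ≠ 0, h (x ^ d) ≠ 0) ∧ ∀ x ≠ 0, ∀ y ≠ 0,
        x ^ (d * n) * h (x ^ d) ^ d = y ^ (d * n) * h (y ^ d) ^ d → x ^ d = y ^ d := by
  refine ⟨fun hbij => ?_, fun ⟨h0, hpow⟩ =>
    Finite.injective_iff_bijective.mp (injective_pow_mul_comp_pow h hn hnd h0 hpow)⟩
  have h0 : ∀ x ≠ 0, h (x ^ d) ≠ 0 := fun x hx hx0 =>
    hx (hbij.injective (by simp only [hx0, mul_zero, zero_pow hn.ne', zero_mul]))
  exact ⟨h0, fun x hx y _ => pow_eq_pow_of_injective_pow_mul_comp_pow h hnd hbij.injective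
    (mul_ne_zero (pow_ne_zero n hx) (h0 x hx))⟩

end Criterion

lemma FiniteField.pow_mul_eq_pow_mul_of_modEq {F : Type*} [Field F] [Fintype F] {d n e : ℕ}
    (hd : d ∣ Fintype.card F - 1) (hne : n ≡ e [MOD (Fintype.card F - 1) / d]) {x : F}
    (hx : x ≠ 0) : x ^ (d * n) = x ^ (d * e) :=
  pow_eq_pow_of_modEq (by simpa only [Nat.mul_div_cancel' hd] using hne.mul_left' d)
    (FiniteField.pow_card_sub_one_eq_one x hx)

theorem stmt_4_general (q : ℕ)
    (F : Type*) [Field F] [Fintype F] (hcard : Fintype.card F = q)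
    (d n e : ℕ) (hn : 0 < n) (he : 0 < e)
    (hdvd : d ∣ q - 1) (hgcd : Nat.gcd (n * e) d = 1)
    (hcong : n ≡ e [MOD (q - 1) / d])
    (a : F) :
    Function.Bijective
        (fun x : F => Polynomial.eval x (X ^ n * (X ^ d + C a))) ↔
      Function.Bijective
        (fun x : F => Polynomial.eval x (X ^ e * (X ^ d + C a))) := by
  subst hcard
  have hnd : n.Coprime d := Nat.Coprime.coprime_dvd_left (dvd_mul_right n e) hgcd
  have hed : e.Coprime d := Nat.Coprime.coprime_dvd_left (dvd_mul_left e n) hgcd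
  have hpow (x : F) (hx : x ≠ 0) : x ^ (d * n) = x ^ (d * e) :=
    FiniteField.pow_mul_eq_pow_mul_of_modEq hdvd hcong hx
  simp only [eval_mul, eval_pow, eval_add, eval_X, eval_C]
  refine (bijective_pow_mul_comp_pow_iff (· + a) hn hnd).trans
    (Iff.trans ?_ (bijective_pow_mul_comp_pow_iff (· + a) he hed).symm)
  refine and_congr_right fun _ => forall₂_congr fun x hx => forall₂_congr fun y hy => ?_
  rw [hpow x hx, hpow y hy]

theorem stmt_4 (q : ℕ) (hq : IsPrimePow q)
    (F : Type*) [Field F] [Fintype F] (hcard : Fintype.card F = q)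
    (d n e : ℕ) (hd : 0 < d) (hn : 0 < n) (he : 0 < e)
    (hdvd : d ∣ q - 1) (hgcd : Nat.gcd (n * e) d = 1)
    (hcong : n ≡ e [MOD (q - 1) / d])
    (a : F) (ha : a ≠ 0) :
    Function.Bijective
        (fun x : F => Polynomial.eval x (X ^ n * (X ^ d + C a))) ↔
      Function.Bijective
        (fun x : F => Polynomial.eval x (X ^ e * (X ^ d + C a))) :=
  stmt_4_general q F hcard d n e hn he hdvd hgcd hcong a
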